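/- arXiv:1211.4282 — 3 statements merged into one kernel-verified Lean document; each statement's English description precedes it below -/
import Mathlib

section
/- The approximation error of the smooth maximum is uniformly bounded: for any λ > 0 and any g ∈ ℝ^J, 0 ≤ max_j g_j − m_λ(g) ≤ λ^{-1} · W((J−1)/e), where W is the Lambert product-logarithm function. -/
/-!
Write `M = max_j g_j`, `d_j = λ (M - g_j) ≥ 0` and `S = Σ_l exp (λ g_l)`. Then
`λ S (M - m_λ(g)) - w S = exp (λ M) Σ_j exp (-d_j) (d_j - w)`. The maximizing index contributes
`-w`, and each of the other `J - 1` terms is at most `max_x exp (-x) (x - w) = exp (-(w + 1))`;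
the Lambert equation `w exp w = (J - 1) / e` says exactly that `(J - 1) exp (-(w + 1)) = w`.
-/

open Real Finset

lemma exp_neg_mul_sub_le (x w : ℝ) : exp (-x) * (x - w) ≤ exp (-(w + 1)) :=
  calc exp (-x) * (x - w) ≤ exp (-x) * exp (x - w - 1) := by
        gcongr; linarith [add_one_le_exp (x - w - 1)]
    _ = exp (-(w + 1)) := by rw [← exp_add]; ring_nf

section SmoothMax

variable {ι : Type*} [Fintype ι]

lemma sum_exp_neg_mul_sub_nonpos {d : ι → ℝ} {j₀ : ι} (hj₀ : d j₀ = 0) {w : ℝ}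
    (hw : ((Fintype.card ι : ℝ) - 1) * exp (-(w + 1)) ≤ w) :
    ∑ j, exp (-d j) * (d j - w) ≤ 0 := by
  classical
  have hrest : ∑ j ∈ univ.erase j₀, exp (-d j) * (d j - w)
      ≤ ((Fintype.card ι : ℝ) - 1) * exp (-(w + 1)) :=
    calc ∑ j ∈ univ.erase j₀, exp (-d j) * (d j - w)
        ≤ ∑ _j ∈ univ.erase j₀, exp (-(w + 1)) := sum_le_sum fun j _ => exp_neg_mul_sub_le _ _
      _ = ((Fintype.card ι : ℝ) - 1) * exp (-(w + 1)) := by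
        rw [sum_const, nsmul_eq_mul, card_erase_of_mem (mem_univ _), card_univ,
          Nat.cast_pred (Fintype.card_pos_iff.2 ⟨j₀⟩)]
  rw [← add_sum_erase _ _ (mem_univ j₀), hj₀, neg_zero, exp_zero, one_mul]
  linarith

/-- The paper's `m_λ(g)`. -/
noncomputable def smoothMax (lam : ℝ) (g : ι → ℝ) : ℝ :=
  ∑ j, (exp (lam * g j) / ∑ l, exp (lam * g l)) * g j

lemma smoothMax_eq_div (lam : ℝ) (g : ι → ℝ) :
    smoothMax lam g = (∑ j, exp (lam * g j) * g j) / ∑ l, exp (lam * g l) := by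
  rw [smoothMax, sum_div]
  exact sum_congr rfl fun j _ => div_mul_eq_mul_div _ _ _

variable [Nonempty ι]

lemma sum_exp_mul_pos (lam : ℝ) (g : ι → ℝ) : 0 < ∑ l, exp (lam * g l) :=
  sum_pos (fun _ _ => exp_pos _) univ_nonempty

lemma smoothMax_le_sup' (lam : ℝ) (g : ι → ℝ) : smoothMax lam g ≤ univ.sup' univ_nonempty g := by
  rw [smoothMax_eq_div, div_le_iff₀ (sum_exp_mul_pos lam g), mul_sum]
  exact sum_le_sum fun j _ => by
    rw [mul_comm _ (exp _)]; exact mul_le_mul_of_nonneg_left (le_sup' g (mem_univ j)) (exp_pos _).le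

lemma sup'_sub_smoothMax_le {lam : ℝ} (hlam : 0 < lam) (g : ι → ℝ) {w : ℝ}
    (hw : ((Fintype.card ι : ℝ) - 1) * exp (-(w + 1)) ≤ w) :
    univ.sup' univ_nonempty g - smoothMax lam g ≤ lam⁻¹ * w := by
  obtain ⟨j₀, -, hj₀⟩ := exists_mem_eq_sup' univ_nonempty g
  set M := univ.sup' univ_nonempty g
  set S := ∑ l, exp (lam * g l)
  have hgap : ∑ j, exp (lam * g j) * (lam * (M - g j) - w) ≤ 0 := by
    have hshift : ∀ j, exp (lam * g j) = exp (lam * M) * exp (-(lam * (M - g j))) := fun j => by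
      rw [← exp_add]; ring_nf
    simp only [hshift, mul_assoc, ← mul_sum]
    exact mul_nonpos_of_nonneg_of_nonpos (exp_pos _).le
      (sum_exp_neg_mul_sub_nonpos (j₀ := j₀) (by rw [hj₀, sub_self, mul_zero]) hw)
  have hexpand : ∑ j, exp (lam * g j) * (lam * (M - g j) - w)
      = lam * (M * S - ∑ j, exp (lam * g j) * g j) - w * S := by
    simp only [S, mul_sum, ← sum_sub_distrib]
    exact sum_congr rfl fun j _ => by ring
  have hS : 0 < S := sum_exp_mul_pos lam g
  have hclear : (M - (∑ j, exp (lam * g j) * g j) / S) * lam * S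
      = lam * (M * S - ∑ j, exp (lam * g j) * g j) := by
    field_simp
  rw [smoothMax_eq_div, inv_mul_eq_div, le_div_iff₀ hlam, ← mul_le_mul_iff_of_pos_right hS, hclear]
  linarith

end SmoothMax

theorem smoothMax_error_bound_general {J : ℕ} (hJ : 0 < J) (g : Fin J → ℝ) (lam : ℝ) (hlam : 0 < lam)
    (w : ℝ) (hW : w * Real.exp w = ((J : ℝ) - 1) / Real.exp 1) :
    0 ≤ Finset.univ.sup' (Finset.univ_nonempty_iff.mpr ⟨⟨0, hJ⟩⟩) g
        - ∑ j : Fin J, (Real.exp (lam * g j) / ∑ l : Fin J, Real.exp (lam * g l)) * g j ∧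
    Finset.univ.sup' (Finset.univ_nonempty_iff.mpr ⟨⟨0, hJ⟩⟩) g
        - ∑ j : Fin J, (Real.exp (lam * g j) / ∑ l : Fin J, Real.exp (lam * g l)) * g j
      ≤ lam⁻¹ * w := by
  have : Nonempty (Fin J) := ⟨⟨0, hJ⟩⟩
  have hw : ((Fintype.card (Fin J) : ℝ) - 1) * exp (-(w + 1)) ≤ w := by
    rw [Fintype.card_fin, ← div_mul_cancel₀ ((J : ℝ) - 1) (exp_pos 1).ne', ← hW, mul_assoc,
      mul_assoc, ← exp_add, ← exp_add]
    norm_num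
  exact ⟨sub_nonneg.2 (smoothMax_le_sup' lam g), sup'_sub_smoothMax_le hlam g hw⟩

/-- Uniform bound on the approximation error of the smooth maximum:
`0 ≤ max_j g_j − m_λ(g) ≤ λ⁻¹ · W((J−1)/e)`, where `W` is the Lambert product-logarithm,
characterized here as the unique `w ≥ 0` with `w · exp w = (J−1)/e`. -/
theorem smoothMax_error_bound {J : ℕ} (hJ : 0 < J) (g : Fin J → ℝ) (lam : ℝ) (hlam : 0 < lam)
    (w : ℝ) (hw0 : 0 ≤ w) (hW : w * Real.exp w = ((J : ℝ) - 1) / Real.exp 1) :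
    0 ≤ Finset.univ.sup' (Finset.univ_nonempty_iff.mpr ⟨⟨0, hJ⟩⟩) g
        - ∑ j : Fin J, (Real.exp (lam * g j) / ∑ l : Fin J, Real.exp (lam * g l)) * g j ∧
    Finset.univ.sup' (Finset.univ_nonempty_iff.mpr ⟨⟨0, hJ⟩⟩) g
        - ∑ j : Fin J, (Real.exp (lam * g j) / ∑ l : Fin J, Real.exp (lam * g l)) * g j
      ≤ lam⁻¹ * w :=
  smoothMax_error_bound_general hJ g lam hlam w hW
end

section
/- The function F(h_2,...,h_J) := (Σ_{j=2}^J e^{-h_j} h_j) / (1 + Σ_{j=2}^J e^{-h_j}) on [0,∞)^{J-1} attains its maximum value W((J−1)/e) at the symmetric point h_2 = ... = h_J = 1 + W((J−1)/e), where W is the Lambert function. -/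
open Real Finset

/-! The tangent-line bound `x - w ≤ e^{x-(1+w)}` gives `e^{-x}(x - w) ≤ e^{-(1+w)}` for every `x`,
with equality at `x = 1 + w`. Summing over the coordinates, `Σ e^{-h_j} h_j - W Σ e^{-h_j}` is at
most `n e^{-(1+W)}`, which the Lambert equation `W e^W = n/e` makes equal to `W`; this is
`F(h) ≤ W`, with equality at the symmetric point. -/

theorem exp_neg_mul_sub_le_exp_neg_one_add (x w : ℝ) :
    exp (-x) * (x - w) ≤ exp (-(1 + w)) :=
  calc exp (-x) * (x - w) = exp (-x) * ((x - (1 + w)) + 1) := by ring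
    _ ≤ exp (-x) * exp (x - (1 + w)) := by gcongr; exact add_one_le_exp _
    _ = exp (-(1 + w)) := by rw [← exp_add]; ring_nf

theorem mul_exp_neg_one_add_of_mul_exp_eq {c w : ℝ} (h : w * exp w = c / exp 1) :
    c * exp (-(1 + w)) = w := by
  rw [eq_div_iff (exp_pos 1).ne'] at h
  rw [← h, mul_assoc, mul_assoc, ← exp_add, ← exp_add]
  simp

theorem sum_exp_neg_mul_le {ι : Type*} [Fintype ι] (h : ι → ℝ) {w : ℝ}
    (hw : Fintype.card ι * exp (-(1 + w)) = w) :
    ∑ j, exp (-h j) * h j ≤ w * (1 + ∑ j, exp (-h j)) := by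
  have hsum : ∑ j, exp (-h j) * (h j - w) ≤ w :=
    calc ∑ j, exp (-h j) * (h j - w) ≤ ∑ _j : ι, exp (-(1 + w)) :=
          sum_le_sum fun j _ => exp_neg_mul_sub_le_exp_neg_one_add (h j) w
      _ = w := by rw [sum_const, card_univ, nsmul_eq_mul, hw]
  have hsplit : ∑ j, exp (-h j) * (h j - w) = ∑ j, exp (-h j) * h j - w * ∑ j, exp (-h j) := by
    rw [mul_sum, ← sum_sub_distrib]
    exact sum_congr rfl fun j _ => by ring
  linarith

theorem F_max_lambert_general {n : ℕ} (W : ℝ) (hW0 : 0 ≤ W)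
    (hW : W * Real.exp W = (n : ℝ) / Real.exp 1) :
    (∀ h : Fin n → ℝ, (∀ j, 0 ≤ h j) →
      (∑ j : Fin n, Real.exp (-h j) * h j) / (1 + ∑ j : Fin n, Real.exp (-h j)) ≤ W) ∧
    (∑ j : Fin n, Real.exp (-(1 + W)) * (1 + W)) / (1 + ∑ j : Fin n, Real.exp (-(1 + W))) = W := by
  have hkey : (n : ℝ) * exp (-(1 + W)) = W := mul_exp_neg_one_add_of_mul_exp_eq hW
  constructor
  · intro h _
    rw [div_le_iff₀ (by positivity)]
    exact sum_exp_neg_mul_le h (by simpa using hkey)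
  · simp only [sum_const, card_univ, Fintype.card_fin, nsmul_eq_mul]
    rw [← mul_assoc, hkey, mul_div_assoc, div_self (by positivity), mul_one]

/-- The function `F(h) = (Σ e^{-h_j} h_j)/(1 + Σ e^{-h_j})` on the nonnegative orthant
attains its maximum value `W* = W((J−1)/e)` at the symmetric point `h_j = 1 + W*`.
Here `n = J - 1 ≥ 1` and `W*` is characterized by `W* ≥ 0`, `W* · exp W* = (J−1)/e = n/e`. -/
theorem F_max_lambert {n : ℕ} (hn : 0 < n) (W : ℝ) (hW0 : 0 ≤ W)
    (hW : W * Real.exp W = (n : ℝ) / Real.exp 1) :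
    (∀ h : Fin n → ℝ, (∀ j, 0 ≤ h j) →
      (∑ j : Fin n, Real.exp (-h j) * h j) / (1 + ∑ j : Fin n, Real.exp (-h j)) ≤ W) ∧
    (∑ j : Fin n, Real.exp (-(1 + W)) * (1 + W)) / (1 + ∑ j : Fin n, Real.exp (-(1 + W))) = W :=
  F_max_lambert_general W hW0 hW
end

section
/- Chetty's optimization-friction bound: for ε, ε^o > 0 and Δ > 0, the value δ_OF(ε) := (ε − ε^o)²·Δ²/(8ε) satisfies: ε lies in the interval [ε_L, ε_U] determined by the equations ε^o = ε_U − 2(2ε_U δ)^{1/2}/Δ and ε^o = ε_L + 2(2ε_L δ)^{1/2}/Δ if and only if δ ≥ δ_OF(ε). -/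
/-!
Squaring the defining equations of `ε_L` and `ε_U` shows that both are roots of the quadratic
`q(x) = (x - ε^o)² Δ² - 8 δ x`, whose leading coefficient `Δ²` is positive, so
`q(x) = Δ² (x - ε_L) (x - ε_U)`. For `ε > 0` the inequality `δ ≥ δ_OF(ε)` is `q(ε) ≤ 0`,
which holds exactly between the two roots.
-/

open Real

lemma quadratic_eq_mul_sub_mul_sub {K : Type*} [Field K] {a b c r s : K}
    (hr : a * r ^ 2 + b * r + c = 0) (hs : a * s ^ 2 + b * s + c = 0) (hrs : r ≠ s) (x : K) :
    a * x ^ 2 + b * x + c = a * (x - r) * (x - s) := by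
  have hb : b = -a * (r + s) := by
    have : (r - s) * (a * (r + s) + b) = 0 := by linear_combination hr - hs
    linear_combination (mul_eq_zero.mp this).resolve_left (sub_ne_zero.mpr hrs)
  have hc : c = a * r * s := by linear_combination hr - r * hb
  rw [hb, hc]
  ring

lemma sq_sub_mul_sq_eq_of_sq_eq {x c Δ δ : ℝ} (hΔ : Δ ≠ 0) (hx : 0 ≤ x) (hδ : 0 ≤ δ)
    (h : (x - c) ^ 2 = (2 * √(2 * x * δ) / Δ) ^ 2) : (x - c) ^ 2 * Δ ^ 2 = δ * (8 * x) := by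
  rw [h, div_pow, mul_pow, sq_sqrt (by positivity), div_mul_cancel₀ _ (pow_ne_zero 2 hΔ)]
  ring

lemma friction_quadratic_eq {εo Δ δ εL εU : ℝ} (hΔ : 0 < Δ) (hδ : 0 ≤ δ)
    (hL0 : 0 < εL) (hLo : εL ≤ εo) (hoU : εo ≤ εU)
    (hU : εo = εU - 2 * √(2 * εU * δ) / Δ) (hL : εo = εL + 2 * √(2 * εL * δ) / Δ) (x : ℝ) :
    (x - εo) ^ 2 * Δ ^ 2 - δ * (8 * x) = Δ ^ 2 * ((x - εL) * (x - εU)) := by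
  have hqU : (εU - εo) ^ 2 * Δ ^ 2 = δ * (8 * εU) :=
    sq_sub_mul_sq_eq_of_sq_eq hΔ.ne' (by linarith) hδ (by rw [hU]; ring)
  have hqL : (εL - εo) ^ 2 * Δ ^ 2 = δ * (8 * εL) :=
    sq_sub_mul_sq_eq_of_sq_eq hΔ.ne' hL0.le hδ (by rw [hL]; ring)
  rcases eq_or_ne εL εU with hLU | hLU
  · have hLo' : εL = εo := le_antisymm hLo (hLU ▸ hoU)
    have hδ0 : δ = 0 := by
      rw [hLo', sub_self] at hqL
      nlinarith
    subst hLU hLo' hδ0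
    ring
  · have := quadratic_eq_mul_sub_mul_sub (a := Δ ^ 2) (b := -(2 * εo * Δ ^ 2 + 8 * δ))
      (c := εo ^ 2 * Δ ^ 2) (by linear_combination hqL) (by linear_combination hqU) hLU x
    linear_combination this

theorem chetty_bound_general (εo Δ δ εL εU : ℝ) (hΔ : 0 < Δ) (hδ : 0 ≤ δ)
    (hL0 : 0 < εL) (hLo : εL ≤ εo) (hoU : εo ≤ εU)
    (hU : εo = εU - 2 * Real.sqrt (2 * εU * δ) / Δ)
    (hL : εo = εL + 2 * Real.sqrt (2 * εL * δ) / Δ) :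
    ∀ ε : ℝ, 0 < ε →
      ((εL ≤ ε ∧ ε ≤ εU) ↔ (ε - εo) ^ 2 * Δ ^ 2 / (8 * ε) ≤ δ) := by
  intro ε hε
  rw [← sub_mul_sub_nonpos_iff ε (hLo.trans hoU), ← mul_le_mul_iff_right₀ (pow_pos hΔ 2),
    mul_zero, ← friction_quadratic_eq hΔ hδ hL0 hLo hoU hU hL, sub_nonpos,
    div_le_iff₀ (by positivity)]

/-- Chetty's optimization-friction bound: if `ε_L ≤ ε^o ≤ ε_U` solve
`ε^o = ε_U − 2√(2 ε_U δ)/Δ` and `ε^o = ε_L + 2√(2 ε_L δ)/Δ`, then a structural elasticity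
`ε > 0` satisfies `ε ∈ [ε_L, ε_U]` iff `δ ≥ δ_OF(ε) = (ε − ε^o)² Δ² / (8ε)`. -/
theorem chetty_bound (εo Δ δ εL εU : ℝ) (hεo : 0 < εo) (hΔ : 0 < Δ) (hδ : 0 ≤ δ)
    (hL0 : 0 < εL) (hLo : εL ≤ εo) (hoU : εo ≤ εU)
    (hU : εo = εU - 2 * Real.sqrt (2 * εU * δ) / Δ)
    (hL : εo = εL + 2 * Real.sqrt (2 * εL * δ) / Δ) :
    ∀ ε : ℝ, 0 < ε →
      ((εL ≤ ε ∧ ε ≤ εU) ↔ (ε - εo) ^ 2 * Δ ^ 2 / (8 * ε) ≤ δ) :=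
  chetty_bound_general εo Δ δ εL εU hΔ hδ hL0 hLo hoU hU hL
end
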